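/- Pfaffian of a congruence/factorization: if S is a 2r×m matrix with m > 2r and J is a 2r×2r skew-symmetric matrix, then for any even-size index set α ⊆ [m], Pf((SᵀJS)(α,α)) = Σ_{K ⊆ [2r], |K| = |α|} Pf(J(K,K)) · det(S(K, α)); in particular Pf((SᵀJS)(α,α)) = 0 whenever |α| > 2r. -/

import Mathlib

/-!
Expanding along the first row gives, for any `J`, the multilinear expansion
`pf (Tᵀ J T) = ∑_g (∏ᵢ T (g i) i) · pf (J (g, g))` over all index maps `g`. For skew `J`
the Pfaffian is alternating, `pf (A (σ, σ)) = sign σ · pf A`; it suffices to check this on adjacent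
transpositions: for `(0 1)` by expanding twice and pairing the two removed indices, for the others
by induction on the minors. Hence the non-injective `g` contribute nothing (for them
`pf = -pf`), and writing an injective `g` as the increasing enumeration of its image `K` composed
with a permutation collects the remaining terms into `pf (J (K, K)) · det T (K, ·)`.
-/

open Matrix

/-- The Pfaffian of an `N × N` matrix, via the Laplace-type expansion along the first row.
For odd `N` it is `0`, matching the convention that only even-sized skew-symmetric matrices
have a (possibly nonzero) Pfaffian. -/
noncomputable def pf (R : Type*) [CommRing R] : (N : ℕ) → Matrix (Fin N) (Fin N) R → R
  | 0, _ => 1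
  | 1, _ => 0
  | (N+2), A => ∑ j : Fin (N+1), (-1 : R)^(j:ℕ) * A 0 j.succ *
      pf R N (fun a b => A ((j.succAbove a).succ) ((j.succAbove b).succ))

/-- The involution `(p, k) ↦ (q, k')` with `q = p.succAbove k` and `q.succAbove k' = p`:
it exchanges the two holes of `p.succAbove ∘ k.succAbove`. -/
def Fin.swapHoles (n : ℕ) : Equiv.Perm (Fin (n + 2) × Fin (n + 1)) :=
  Function.Involutive.toPerm (fun pk => (pk.1.succAbove pk.2, pk.2.predAbove pk.1)) fun pk => by
    ext <;> simp [Fin.succAbove_succAbove_predAbove, Fin.predAbove_predAbove_succAbove]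

theorem Fin.swap_castSucc_succ_comp_succAbove_succ {N : ℕ} (i : Fin N) :
    ⇑(Equiv.swap i.castSucc i.succ) ∘ i.succ.succAbove = i.castSucc.succAbove := by
  funext a
  simp only [Function.comp_apply, Equiv.swap_apply_def, Fin.succAbove, Fin.ext_iff, Fin.lt_def,
    Fin.val_castSucc, Fin.val_succ]
  split_ifs <;> simp_all <;> omega

theorem Finset.range_orderEmbOfFin_comp_perm {ι : Type*} [LinearOrder ι] {n : ℕ} (K : Finset ι)
    (hK : K.card = n) (σ : Equiv.Perm (Fin n)) : Set.range (K.orderEmbOfFin hK ∘ σ) = K := by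
  rw [Set.range_comp, σ.range_eq_univ, Set.image_univ, Finset.range_orderEmbOfFin]

theorem sum_injective_eq_sum_orderEmbOfFin_comp_perm {ι M : Type*} [Fintype ι] [LinearOrder ι]
    [AddCommMonoid M] {n : ℕ} (f : (Fin n → ι) → M) :
    ∑ g with g.Injective, f g =
      ∑ K : {K : Finset ι // K.card = n}, ∑ σ : Equiv.Perm (Fin n),
        f (K.1.orderEmbOfFin K.2 ∘ σ) := by
  rw [← Fintype.sum_prod_type']
  symm
  refine Finset.sum_bij (fun Kσ _ => Kσ.1.1.orderEmbOfFin Kσ.1.2 ∘ Kσ.2) ?_ ?_ ?_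
    fun _ _ => rfl
  · intro ⟨K, σ⟩ _
    simpa using (K.1.orderEmbOfFin K.2).injective.comp σ.injective
  · intro ⟨⟨K₁, hK₁⟩, σ₁⟩ _ ⟨⟨K₂, hK₂⟩, σ₂⟩ _ h
    obtain rfl : K₁ = K₂ := by
      simpa using (K₁.range_orderEmbOfFin_comp_perm hK₁ σ₁).symm.trans
        ((congrArg Set.range h).trans (K₂.range_orderEmbOfFin_comp_perm hK₂ σ₂))
    obtain rfl : σ₁ = σ₂ :=
      Equiv.ext fun x => (K₁.orderEmbOfFin hK₁).injective (congrFun h x)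
    rfl
  · intro g hg
    have hg : g.Injective := by simpa using hg
    set K := Finset.univ.image g
    have hK : K.card = n := by rw [Finset.card_image_of_injective _ hg, Finset.card_fin]
    have hmem (x : Fin n) : g x ∈ K := Finset.mem_image_of_mem g (Finset.mem_univ x)
    let σ : Fin n → Fin n := fun x => (K.orderIsoOfFin hK).symm ⟨g x, hmem x⟩
    have hσ (x : Fin n) : K.orderEmbOfFin hK (σ x) = g x := by
      rw [← Finset.coe_orderIsoOfFin_apply, OrderIso.apply_symm_apply]
    have hσinj : σ.Injective := fun x y hxy => hg (by rw [← hσ, ← hσ, hxy])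
    exact ⟨(⟨K, hK⟩, Equiv.ofBijective σ (Finite.injective_iff_bijective.mp hσinj)),
      Finset.mem_univ _, funext hσ⟩

theorem transpose_submatrix_self_of_transpose_eq_neg {R m n : Type*} [Neg R] {A : Matrix n n R}
    (hA : Aᵀ = -A) (f : m → n) : (A.submatrix f f)ᵀ = -A.submatrix f f := by
  rw [transpose_submatrix, hA]; rfl

section

variable {R : Type*} [CommRing R]

theorem Fin.sum_sum_neg_one_pow_succAbove_swap {n : ℕ} (u v : Fin (n + 2) → R)
    (H : (Fin n → Fin (n + 2)) → R) :
    ∑ p : Fin (n + 2), ∑ k : Fin (n + 1),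
        (-1) ^ ((p : ℕ) + k) * u p * v (p.succAbove k) * H (p.succAbove ∘ k.succAbove) =
      -∑ p : Fin (n + 2), ∑ k : Fin (n + 1),
        (-1) ^ ((p : ℕ) + k) * v p * u (p.succAbove k) * H (p.succAbove ∘ k.succAbove) := by
  simp only [← Fintype.sum_prod_type', ← Finset.sum_neg_distrib]
  rw [← Equiv.sum_comp (Fin.swapHoles n)]
  refine Fintype.sum_congr _ _ fun ⟨p, k⟩ => ?_
  have hswap : Fin.swapHoles n (p, k) = (p.succAbove k, k.predAbove p) := rfl
  have hemb :
      (p.succAbove k).succAbove ∘ (k.predAbove p).succAbove = p.succAbove ∘ k.succAbove :=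
    funext (Fin.succAbove_succAbove_succAbove_predAbove p k)
  simp only [hswap, Fin.succAbove_succAbove_predAbove, hemb,
    Fin.neg_one_pow_succAbove_add_predAbove]
  ring

theorem pf_add_two {N : ℕ} (A : Matrix (Fin (N + 2)) (Fin (N + 2)) R) :
    pf R (N + 2) A = ∑ j : Fin (N + 1), (-1) ^ (j : ℕ) * A 0 j.succ *
      pf R N (A.submatrix (Fin.succ ∘ j.succAbove) (Fin.succ ∘ j.succAbove)) := by
  rw [pf]; rfl

theorem pf_add_four {M : ℕ} (A : Matrix (Fin (M + 4)) (Fin (M + 4)) R) :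
    pf R (M + 4) A =
      A 0 1 * pf R (M + 2) (A.submatrix (Fin.succ ∘ Fin.succ) (Fin.succ ∘ Fin.succ)) -
        ∑ p : Fin (M + 2), ∑ k : Fin (M + 1),
          (-1) ^ ((p : ℕ) + k) * A 0 p.succ.succ * A 1 (p.succAbove k).succ.succ *
            pf R M (A.submatrix (Fin.succ ∘ Fin.succ ∘ p.succAbove ∘ k.succAbove)
              (Fin.succ ∘ Fin.succ ∘ p.succAbove ∘ k.succAbove)) := by
  rw [pf_add_two, Fin.sum_univ_succ, sub_eq_add_neg, ← Finset.sum_neg_distrib]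
  congr 1
  · simp
  · refine Finset.sum_congr rfl fun p _ => ?_
    rw [pf_add_two, Finset.mul_sum, ← Finset.sum_neg_distrib]
    refine Finset.sum_congr rfl fun k _ => ?_
    have hemb : (Fin.succ ∘ p.succ.succAbove) ∘ Fin.succ ∘ k.succAbove =
        Fin.succ ∘ Fin.succ ∘ p.succAbove ∘ k.succAbove := by
      funext a; simp [Fin.succ_succAbove_succ]
    simp only [submatrix_apply, submatrix_submatrix, Function.comp_apply, Fin.succ_succAbove_zero,
      Fin.succ_succAbove_succ, Fin.val_succ, Fin.succ_zero_eq_one, hemb]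
    ring

theorem pf_transpose_mul_mul {ι : Type*} [Fintype ι] :
    ∀ {n : ℕ} (J : Matrix ι ι R) (T : Matrix ι (Fin n) R),
      pf R n (Tᵀ * J * T) = ∑ g : Fin n → ι, (∏ i, T (g i) i) * pf R n (J.submatrix g g)
  | 0, J, T => by simp [pf]
  | 1, J, T => by simp [pf]
  | N + 2, J, T => by
    simp_rw [pf_add_two, Finset.mul_sum, submatrix_submatrix]
    rw [Finset.sum_comm]
    refine Finset.sum_congr rfl fun j _ => ?_
    let e : Fin N → Fin (N + 2) := Fin.succ ∘ j.succAbove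
    have hminor : (Tᵀ * J * T).submatrix e e = (T.submatrix id e)ᵀ * J * T.submatrix id e := by
      ext a b; simp [mul_apply]
    rw [hminor, pf_transpose_mul_mul, ← (Fin.consEquiv fun _ => ι).sum_comp (M := R),
      Fintype.sum_prod_type]
    conv_rhs =>
      enter [2, x]
      rw [← (Fin.insertNthEquiv (fun _ => ι) j).sum_comp (M := R), Fintype.sum_prod_type]
    have hcomp (x y : ι) (g : Fin N → ι) :
        (Fin.consEquiv fun _ => ι) (x, Fin.insertNthEquiv (fun _ => ι) j (y, g)) ∘ e = g := by
      funext a; simp [e]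
    simp only [mul_apply, transpose_apply, Finset.sum_mul, Finset.mul_sum]
    conv_lhs => rw [Finset.sum_comm]; enter [2, y]; rw [Finset.sum_comm]
    rw [Finset.sum_comm]
    refine Finset.sum_congr rfl fun y _ => Finset.sum_congr rfl fun x _ =>
      Finset.sum_congr rfl fun g _ => ?_
    rw [hcomp]
    simp only [submatrix_apply, id_eq, Function.comp_apply, Fin.consEquiv_apply,
      Fin.prod_univ_succ, Fin.cons_zero, Fin.cons_succ, Fin.insertNthEquiv_apply,
      Fin.prod_univ_succAbove _ j, Fin.insertNth_apply_same, Fin.insertNth_apply_succAbove, e]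
    ring

theorem pf_submatrix_swap_zero_one {N : ℕ} {A : Matrix (Fin (N + 2)) (Fin (N + 2)) R}
    (hA : Aᵀ = -A) :
    pf R (N + 2) (A.submatrix (Equiv.swap 0 1) (Equiv.swap 0 1)) = -pf R (N + 2) A := by
  have h10 : A 1 0 = -A 0 1 := by simpa using congr_fun₂ hA 0 1
  rcases N with _ | _ | M
  · simp [pf, h10]
  · simp [pf]
  have hfix (x : Fin (M + 2)) : Equiv.swap (0 : Fin (M + 4)) 1 x.succ.succ = x.succ.succ :=
    Equiv.swap_apply_of_ne_of_ne (Fin.succ_ne_zero _)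
      (Fin.succ_injective _ |>.ne (Fin.succ_ne_zero _))
  rw [pf_add_four, pf_add_four]
  simp only [submatrix_apply, submatrix_submatrix, Function.comp_def, Equiv.swap_apply_left,
    Equiv.swap_apply_right, hfix, h10]
  have hpairs := Fin.sum_sum_neg_one_pow_succAbove_swap (fun x => A 1 x.succ.succ)
    (fun x => A 0 x.succ.succ)
    fun g => pf R M (A.submatrix (Fin.succ ∘ Fin.succ ∘ g) (Fin.succ ∘ Fin.succ ∘ g))
  simp only [Function.comp_def] at hpairs
  rw [hpairs]
  ring

theorem pf_submatrix_swap_succ {N : ℕ}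
    (ih : ∀ B : Matrix (Fin N) (Fin N) R, Bᵀ = -B → ∀ σ : Equiv.Perm (Fin N),
      pf R N (B.submatrix σ σ) = Equiv.Perm.sign σ * pf R N B)
    {A : Matrix (Fin (N + 2)) (Fin (N + 2)) R} (hA : Aᵀ = -A) (i : Fin N) :
    pf R (N + 2) (A.submatrix (Equiv.swap i.castSucc.succ i.succ.succ)
      (Equiv.swap i.castSucc.succ i.succ.succ)) = -pf R (N + 2) A := by
  set t := Equiv.swap i.castSucc i.succ with ht
  have hs : ⇑(Equiv.swap i.castSucc.succ i.succ.succ) ∘ Fin.succ = Fin.succ ∘ t :=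
    (Fin.succ_injective _).swap_comp _ _
  have hs0 : Equiv.swap i.castSucc.succ i.succ.succ 0 = 0 :=
    Equiv.swap_apply_of_ne_of_ne (Fin.succ_ne_zero _).symm (Fin.succ_ne_zero _).symm
  -- After reindexing by `t`, the minors for `j = i` and `j = i + 1` trade places, and every
  -- other minor is the old one with two of its rows and columns swapped.
  have hminor (j : Fin (N + 1)) :
      (-1) ^ (t j : ℕ) * pf R N (A.submatrix (Fin.succ ∘ t ∘ (t j).succAbove)
        (Fin.succ ∘ t ∘ (t j).succAbove)) =
        -((-1) ^ (j : ℕ) * pf R N (A.submatrix (Fin.succ ∘ j.succAbove)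
          (Fin.succ ∘ j.succAbove))) := by
    have hcomp := Fin.swap_castSucc_succ_comp_succAbove_succ i
    by_cases hj₁ : j = i.castSucc
    · rw [hj₁, Equiv.swap_apply_left, hcomp, Fin.val_succ, Fin.val_castSucc, pow_succ]
      ring
    by_cases hj₂ : j = i.succ
    · have hcomp' : ⇑t ∘ i.castSucc.succAbove = i.succ.succAbove := by
        rw [← hcomp]; funext a; exact Equiv.swap_apply_self _ _ _
      rw [hj₂, Equiv.swap_apply_right, hcomp', Fin.val_succ, Fin.val_castSucc, pow_succ]
      ring
    obtain ⟨u, hu⟩ := Fin.exists_succAbove_eq (Ne.symm hj₁)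
    obtain ⟨v, hv⟩ := Fin.exists_succAbove_eq (Ne.symm hj₂)
    have huv : u ≠ v := by
      rintro rfl
      exact Fin.castSucc_lt_succ.ne (hu.symm.trans hv)
    have hcomm : ⇑t ∘ j.succAbove = j.succAbove ∘ Equiv.swap u v := by
      rw [ht, ← hu, ← hv]; exact Fin.succAbove_right_injective.swap_comp u v
    rw [Equiv.swap_apply_of_ne_of_ne hj₁ hj₂, hcomm, ← Function.comp_assoc,
      ← submatrix_submatrix, ih _ (transpose_submatrix_self_of_transpose_eq_neg hA _),
      Equiv.Perm.sign_swap huv]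
    simp
  rw [pf_add_two, pf_add_two, ← Equiv.sum_comp t, ← Finset.sum_neg_distrib]
  refine Fintype.sum_congr _ _ fun j => ?_
  have hsj : Equiv.swap i.castSucc.succ i.succ.succ (t j).succ = j.succ := by
    rw [← Function.comp_apply (f := ⇑(Equiv.swap _ _)), hs, Function.comp_apply,
      Equiv.swap_apply_self]
  simp only [submatrix_apply, submatrix_submatrix, hs0, hsj]
  rw [← Function.comp_assoc, hs, Function.comp_assoc]
  linear_combination A 0 j.succ * hminor j

theorem pf_submatrix_perm : ∀ {n : ℕ} {A : Matrix (Fin n) (Fin n) R}, Aᵀ = -A →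
    ∀ σ : Equiv.Perm (Fin n), pf R n (A.submatrix σ σ) = Equiv.Perm.sign σ * pf R n A
  | 0, _, _, σ => by simp [Subsingleton.elim σ 1]
  | 1, _, _, σ => by simp [Subsingleton.elim σ 1]
  | N + 2, A, hA, σ => by
    have hadj (i : Fin (N + 1)) {B : Matrix (Fin (N + 2)) (Fin (N + 2)) R} (hB : Bᵀ = -B) :
        pf R (N + 2) (B.submatrix (Equiv.swap i.castSucc i.succ) (Equiv.swap i.castSucc i.succ)) =
          -pf R (N + 2) B := by
      cases i using Fin.cases with
      | zero => exact pf_submatrix_swap_zero_one hB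
      | succ i => exact pf_submatrix_swap_succ (fun _ hC τ => pf_submatrix_perm hC τ) hB i
    induction σ using Submonoid.induction_of_closure_eq_top_left
      (Equiv.Perm.mclosure_swap_castSucc_succ _) generalizing A with
    | one => simp
    | mul_left s hs τ ih =>
      obtain ⟨i, rfl⟩ := hs
      rw [Equiv.Perm.coe_mul, ← submatrix_submatrix,
        ih _ (transpose_submatrix_self_of_transpose_eq_neg hA _), hadj i hA, Equiv.Perm.sign_mul,
        Equiv.Perm.sign_swap Fin.castSucc_lt_succ.ne]
      simp

theorem pf_submatrix_eq_zero_of_not_injective [IsAddTorsionFree R] {ι : Type*} {n : ℕ}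
    {J : Matrix ι ι R} (hJ : Jᵀ = -J) {g : Fin n → ι} (hg : ¬g.Injective) :
    pf R n (J.submatrix g g) = 0 := by
  obtain ⟨x, y, hxy, hne⟩ := Function.not_injective_iff.mp hg
  have hgs : g ∘ Equiv.swap x y = g := by
    rw [Equiv.comp_swap_eq_update]; simp [hxy]
  have h := pf_submatrix_perm (transpose_submatrix_self_of_transpose_eq_neg hJ g) (Equiv.swap x y)
  rw [submatrix_submatrix, hgs, Equiv.Perm.sign_swap hne] at h
  exact self_eq_neg.mp (by simpa using h)

theorem pf_transpose_mul_mul_eq_sum_pf_mul_det [IsAddTorsionFree R] {ι : Type*} [Fintype ι]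
    [LinearOrder ι] {n : ℕ} {J : Matrix ι ι R} (hJ : Jᵀ = -J) (T : Matrix ι (Fin n) R) :
    pf R n (Tᵀ * J * T) = ∑ K : {K : Finset ι // K.card = n},
      pf R n (J.submatrix (K.1.orderEmbOfFin K.2) (K.1.orderEmbOfFin K.2)) *
        (T.submatrix (K.1.orderEmbOfFin K.2) id).det := by
  have hvanish : ∑ g with ¬g.Injective, (∏ i, T (g i) i) * pf R n (J.submatrix g g) = 0 :=
    Finset.sum_eq_zero fun g hg => by
      rw [pf_submatrix_eq_zero_of_not_injective hJ (Finset.mem_filter.mp hg).2, mul_zero]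
  rw [pf_transpose_mul_mul, ← Finset.sum_filter_add_sum_filter_not _ Function.Injective, hvanish,
    add_zero, sum_injective_eq_sum_orderEmbOfFin_comp_perm]
  refine Fintype.sum_congr _ _ fun K => ?_
  rw [det_apply', Finset.mul_sum]
  refine Fintype.sum_congr _ _ fun σ => ?_
  rw [← submatrix_submatrix,
    pf_submatrix_perm (transpose_submatrix_self_of_transpose_eq_neg hJ _)]
  simp only [submatrix_apply, Function.comp_apply, id]
  ring

end

theorem pfaffian_minor_summation_general (r m : ℕ)
    (S : Matrix (Fin (2*r)) (Fin m) ℝ)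
    (J : Matrix (Fin (2*r)) (Fin (2*r)) ℝ) (hJ : Jᵀ = -J)
    (α : Finset (Fin m)) :
    pf ℝ α.card ((Sᵀ * J * S).submatrix (α.orderEmbOfFin rfl) (α.orderEmbOfFin rfl)) =
      (∑ K : {K : Finset (Fin (2*r)) // K.card = α.card},
        pf ℝ α.card (J.submatrix (K.1.orderEmbOfFin K.2) (K.1.orderEmbOfFin K.2)) *
          (S.submatrix (K.1.orderEmbOfFin K.2) (α.orderEmbOfFin rfl)).det) ∧
    (2 * r < α.card →
      pf ℝ α.card ((Sᵀ * J * S).submatrix (α.orderEmbOfFin rfl) (α.orderEmbOfFin rfl)) = 0) := by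
  have hminor : (Sᵀ * J * S).submatrix (α.orderEmbOfFin rfl) (α.orderEmbOfFin rfl) =
      (S.submatrix id (α.orderEmbOfFin rfl))ᵀ * J * S.submatrix id (α.orderEmbOfFin rfl) := by
    rw [submatrix_mul _ _ _ id _ Function.bijective_id,
      submatrix_mul _ _ _ id _ Function.bijective_id, transpose_submatrix, submatrix_id_id]
  have hsum := pf_transpose_mul_mul_eq_sum_pf_mul_det hJ (S.submatrix id (α.orderEmbOfFin rfl))
  simp only [submatrix_submatrix, Function.comp_id, Function.id_comp] at hsum
  rw [hminor]
  refine ⟨hsum, fun hlt => ?_⟩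
  have : IsEmpty {K : Finset (Fin (2 * r)) // K.card = α.card} :=
    ⟨fun K => by have := K.1.card_le_univ; simp only [Fintype.card_fin] at this; omega⟩
  rw [hsum, Fintype.sum_empty]

/-- The minor-summation (Ishikawa–Wakayama) formula: for a `2r × m` matrix `S` (`m > 2r`)
and a `2r × 2r` skew-symmetric matrix `J`, every even-size principal Pfaffian minor of
`A = Sᵀ J S` on an index set `α ⊆ [m]` satisfies
`Pf(A(α,α)) = Σ_{K ⊆ [2r], |K| = |α|} Pf(J(K,K)) · det S(K, α)`;
in particular it vanishes whenever `|α| > 2r`. -/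
theorem pfaffian_minor_summation (r m : ℕ) (hm : 2 * r < m)
    (S : Matrix (Fin (2*r)) (Fin m) ℝ)
    (J : Matrix (Fin (2*r)) (Fin (2*r)) ℝ) (hJ : Jᵀ = -J)
    (α : Finset (Fin m)) (hα : Even α.card) :
    pf ℝ α.card ((Sᵀ * J * S).submatrix (α.orderEmbOfFin rfl) (α.orderEmbOfFin rfl)) =
      (∑ K : {K : Finset (Fin (2*r)) // K.card = α.card},
        pf ℝ α.card (J.submatrix (K.1.orderEmbOfFin K.2) (K.1.orderEmbOfFin K.2)) *
          (S.submatrix (K.1.orderEmbOfFin K.2) (α.orderEmbOfFin rfl)).det) ∧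
    (2 * r < α.card →
      pf ℝ α.card ((Sᵀ * J * S).submatrix (α.orderEmbOfFin rfl) (α.orderEmbOfFin rfl)) = 0) :=
  pfaffian_minor_summation_general r m S J hJ α
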